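/- Let n ≥ 2, let D be the subgroup of diagonal matrices of determinant 1 in SL_n(ℂ), and let α₂ ∈ SL_n(ℂ) be the matrix with 1 in every diagonal entry, 1 in every entry of the last (bottom) row, and 0 elsewhere. Then the ℂ-linear span of D ∪ α₂Dα₂⁻¹ contains every matrix β ∈ Mat_n(ℂ) whose (i,j) entry is 0 whenever i ≠ j and i < n (i.e., every matrix supported on the diagonal and the bottom row). -/

import Mathlib

/-!
For `n ≥ 2` the diagonal matrices of determinant one already span all diagonal matrices,
so the span contains every `Eᵢᵢ` and every `α₂ Eₖₖ α₂⁻¹`. For `k ≠ L`, `L` the bottom row,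
column `k` of `α₂` is `eₖ + e_L` while row `k` of `α₂` (hence of `α₂⁻¹`) is `eₖ`, so
`α₂ Eₖₖ α₂⁻¹ = Eₖₖ + E_Lk`; thus the span contains every `E_Lk` as well.
-/

open Matrix

theorem Matrix.mem_of_single_mem_of_ne_zero {m n R : Type*} [Fintype m] [Fintype n]
    [DecidableEq m] [DecidableEq n] [Semiring R] {S : Submodule R (Matrix m n R)}
    {β : Matrix m n R} (h : ∀ i j, β i j ≠ 0 → single i j 1 ∈ S) : β ∈ S := by
  rw [matrix_eq_sum_single β]
  refine Submodule.sum_mem _ fun i _ => Submodule.sum_mem _ fun j _ => ?_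
  by_cases hij : β i j = 0
  · simp [hij]
  · simpa using Submodule.smul_mem _ (β i j) (h i j hij)

section DetOneDiagonal

variable {ι K : Type*} [Fintype ι] [DecidableEq ι] [Nontrivial ι] [Field K] [CharZero K]

theorem span_prod_eq_one_eq_top : Submodule.span K {d : ι → K | ∏ i, d i = 1} = ⊤ := by
  set P := {d : ι → K | ∏ i, d i = 1}
  have hP : ∀ i j (t : K), t ≠ 0 → Pi.mulSingle i t * Pi.mulSingle j t⁻¹ ∈ P := by
    intro i j t ht
    simp [P, Finset.prod_mul_distrib, ht]
  rw [eq_top_iff, ← (Pi.basisFun K ι).span_eq, Submodule.span_le]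
  rintro _ ⟨i, rfl⟩
  obtain ⟨j, hj⟩ := exists_ne i
  have key : Pi.basisFun K ι i = (4/3 : K) • (Pi.mulSingle i 2 * Pi.mulSingle j 2⁻¹)
      + (2/3 : K) • (Pi.mulSingle i 2⁻¹ * Pi.mulSingle j 2) - (2 : K) • 1 := by
    ext k
    rcases eq_or_ne k i with rfl | hki
    · simp [hj]; norm_num
    rcases eq_or_ne k j with rfl | hkj
    · simp [hki]; norm_num
    · simp [hki, hkj]; norm_num
  rw [key]
  exact sub_mem (add_mem (Submodule.smul_mem _ _ (Submodule.subset_span (hP _ _ _ two_ne_zero)))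
    (Submodule.smul_mem _ _ (Submodule.subset_span (by simpa using hP i j 2⁻¹ (by norm_num)))))
    (Submodule.smul_mem _ _ (Submodule.subset_span (by simp [P])))

theorem diagonal_mem_span_det_one (d : ι → K) :
    diagonal d ∈
      Submodule.span K {x : Matrix ι ι K | x.det = 1 ∧ ∀ i j, i ≠ j → x i j = 0} := by
  have hsub : diagonal '' {d : ι → K | ∏ i, d i = 1} ⊆
      {x : Matrix ι ι K | x.det = 1 ∧ ∀ i j, i ≠ j → x i j = 0} := by
    rintro _ ⟨d, hd, rfl⟩
    exact ⟨by rwa [det_diagonal], fun i j h => diagonal_apply_ne d h⟩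
  refine Submodule.span_mono hsub ?_
  rw [show diagonal = diagonalLinearMap ι K K from rfl, Submodule.span_image,
    span_prod_eq_one_eq_top]
  exact ⟨d, trivial, rfl⟩

end DetOneDiagonal

section RowOnes

variable {ι R : Type*} [Fintype ι] [DecidableEq ι] [CommRing R]

def rowOnes (L : ι) : Matrix ι ι R :=
  of fun i j => if i = j then 1 else if i = L then 1 else 0

theorem rowOnes_sub_one_mul_self (L : ι) :
    (rowOnes L - 1 : Matrix ι ι R) * (rowOnes L - 1) = 0 := by
  ext i j
  refine Finset.sum_eq_zero fun c _ => ?_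
  by_cases hic : i = c <;> by_cases hcj : c = j <;> by_cases hcL : c = L <;>
    simp_all [rowOnes, one_apply]

theorem isUnit_rowOnes (L : ι) : IsUnit (rowOnes L : Matrix ι ι R) := by
  simpa using (show IsNilpotent (rowOnes L - 1 : Matrix ι ι R) from
    ⟨2, by rw [sq, rowOnes_sub_one_mul_self]⟩).isUnit_one_add

variable {L k : ι}

theorem rowOnes_mul_single_self (hk : k ≠ L) :
    rowOnes L * single k k (1 : R) = single k k 1 + single L k 1 := by
  ext i j
  rcases eq_or_ne j k with rfl | hjk
  · rw [mul_single_apply_same]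
    by_cases hij : i = j <;> by_cases hiL : i = L <;>
      simp_all [rowOnes, single_apply, eq_comm]
  · simp [mul_single_apply_of_ne (hbj := hjk), hjk.symm]

theorem single_mul_rowOnes (hk : k ≠ L) (i : ι) (c : R) :
    single i k c * rowOnes L = single i k c := by
  ext a b
  rcases eq_or_ne a i with rfl | hai
  · rw [single_mul_apply_same]
    by_cases hkb : k = b <;> simp_all [rowOnes]
  · simp [single_mul_apply_of_ne (h := hai), hai.symm]

theorem rowOnes_mul_single_self_mul_inv (hk : k ≠ L) :
    rowOnes L * single k k (1 : R) * (rowOnes L)⁻¹ = single k k 1 + single L k 1 := by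
  rw [rowOnes_mul_single_self hk]
  conv_lhs => rw [← single_mul_rowOnes hk k, ← single_mul_rowOnes hk L, ← add_mul]
  exact mul_nonsing_inv_cancel_right _ _ ((isUnit_iff_isUnit_det _).mp (isUnit_rowOnes L))

end RowOnes

/-- Let `n ≥ 2`, let `D` be the set of diagonal determinant-one matrices
in `SL_n(ℂ)`, and let `α₂` be the matrix with `1` on the diagonal and in every entry of the
bottom row, zero elsewhere. Then the `ℂ`-span of `D ∪ α₂Dα₂⁻¹` contains every matrix
supported on the diagonal and the bottom row. -/
theorem span_diag_union_conj_row (n : ℕ) (hn : 2 ≤ n)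
    (D : Set (Matrix (Fin n) (Fin n) ℂ))
    (hD : D = {x | x.det = 1 ∧ ∀ i j : Fin n, i ≠ j → x i j = 0})
    (α₂ : Matrix (Fin n) (Fin n) ℂ)
    (hα₂ : α₂ = Matrix.of fun i j : Fin n =>
      if i = j then 1 else if i = (⟨n - 1, by omega⟩ : Fin n) then 1 else 0)
    (β : Matrix (Fin n) (Fin n) ℂ)
    (hβ : ∀ i j : Fin n, i ≠ j → (i : ℕ) < n - 1 → β i j = 0) :
    β ∈ Submodule.span ℂ (D ∪ (fun x => α₂ * x * α₂⁻¹) '' D) := by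
  have : Nontrivial (Fin n) := Fin.nontrivial_iff_two_le.mpr hn
  set L : Fin n := ⟨n - 1, by omega⟩
  obtain rfl : α₂ = rowOnes L := hα₂
  have hspanD : ∀ d, diagonal d ∈ Submodule.span ℂ D := hD ▸ diagonal_mem_span_det_one
  set C := (fun x => rowOnes L * x * (rowOnes L)⁻¹) '' D
  have hdiag : ∀ d, diagonal d ∈ Submodule.span ℂ (D ∪ C) := fun d =>
    Submodule.span_mono Set.subset_union_left (hspanD d)
  have hconj : ∀ d, rowOnes L * diagonal d * (rowOnes L)⁻¹ ∈ Submodule.span ℂ (D ∪ C) :=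
    fun d => Submodule.span_mono Set.subset_union_right <|
      Submodule.apply_mem_span_image_of_mem_span
        (LinearMap.mulLeftRight ℂ (rowOnes L, (rowOnes L)⁻¹)) (hspanD d)
  refine mem_of_single_mem_of_ne_zero fun i j hij => ?_
  rcases eq_or_ne i j with rfl | hne
  · simpa only [diagonal_single] using hdiag (Pi.single i 1)
  · obtain rfl : i = L := Fin.ext (by have := hβ i j hne; have := i.isLt; grind)
    have hrow := sub_mem (hconj (Pi.single j 1)) (hdiag (Pi.single j 1))
    rwa [diagonal_single, rowOnes_mul_single_self_mul_inv hne.symm,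
      add_sub_cancel_left] at hrow
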